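/- Let n ≥ 1 be a natural number, let R ∈ [0,1] be the true false discovery rate, let α ∈ (0,1) be a user-specified risk level with R > α, let δ ∈ (0,1), and let X be a random variable with the binomial distribution Bin(n,R) counting the number of incorrect predictions among n accepted samples. Then Pr(p_U^δ(X) ≤ α) ≤ δ; that is, the probability of falsely certifying that the risk level α is satisfied, when the true error rate R exceeds α, is at most δ. -/

import Mathlib

open scoped Classical BigOperators

/-- The probability mass function of the binomial distribution `Bin(n, p)` at `j`. -/
noncomputable def binomPMF (n : ℕ) (p : ℝ) (j : ℕ) : ℝ :=
  (n.choose j : ℝ) * p ^ j * (1 - p) ^ (n - j)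

/-- The cumulative distribution function of `Bin(n, p)` at `k`:
`F_{n,p}(k) = Σ_{j=0}^{min(k,n)} C(n,j) p^j (1-p)^{n-j}`. -/
noncomputable def binomCDF (n : ℕ) (p : ℝ) (k : ℕ) : ℝ :=
  ∑ j ∈ Finset.range (min k n + 1), binomPMF n p j

/-- One-sided Clopper–Pearson upper confidence bound at count `k` and level `δ`:
`sup {R ∈ [0,1] : F_{n,R}(k) ≥ δ}`. -/
noncomputable def cpUpper (n : ℕ) (δ : ℝ) (k : ℕ) : ℝ :=
  sSup {R : ℝ | R ∈ Set.Icc (0 : ℝ) 1 ∧ δ ≤ binomCDF n R k}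

/-- One-sided Clopper–Pearson lower confidence bound at count `k` and level `δ`:
`inf {R ∈ [0,1] : 1 - F_{n,R}(k-1) ≥ δ}` for `k ≥ 1`, and `0` for `k = 0`. -/
noncomputable def cpLower (n : ℕ) (δ : ℝ) : ℕ → ℝ
  | 0 => 0
  | k + 1 => sInf {R : ℝ | R ∈ Set.Icc (0 : ℝ) 1 ∧ δ ≤ 1 - binomCDF n R k}

open Finset

/-!
If `p_U^δ(k) < R` then `R` lies outside the set whose supremum defines `p_U^δ(k)`, so
`F_{n,R}(k) < δ`. The counts `j` with `p_U^δ(j) ≤ α < R` all lie below the largest such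
count `k`, so their total `Bin(n,R)`-probability is at most `F_{n,R}(k) < δ`.
-/

lemma binomPMF_nonneg {p : ℝ} (hp : p ∈ Set.Icc (0 : ℝ) 1) (n j : ℕ) : 0 ≤ binomPMF n p j :=
  mul_nonneg (mul_nonneg (Nat.cast_nonneg _) (pow_nonneg hp.1 _))
    (pow_nonneg (sub_nonneg.2 hp.2) _)

lemma binomCDF_lt_of_cpUpper_lt {n k : ℕ} {δ p : ℝ} (hp : p ∈ Set.Icc (0 : ℝ) 1)
    (h : cpUpper n δ k < p) : binomCDF n p k < δ := by
  by_contra! hδ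
  exact h.not_ge (le_csSup ⟨1, fun _ hx => hx.1.2⟩ ⟨hp, hδ⟩)

lemma sum_binomPMF_le_binomCDF {n k : ℕ} {p : ℝ} (hp : p ∈ Set.Icc (0 : ℝ) 1)
    {S : Finset ℕ} (hS : S ⊆ range (n + 1)) (hk : ∀ j ∈ S, j ≤ k) :
    ∑ j ∈ S, binomPMF n p j ≤ binomCDF n p k := by
  refine sum_le_sum_of_subset_of_nonneg (fun j hj => ?_) fun j _ _ => binomPMF_nonneg hp n j
  have hjn : j ≤ n := Nat.lt_succ_iff.1 (mem_range.1 (hS hj))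
  exact mem_range.2 (Nat.lt_succ_of_le (le_min (hk j hj) hjn))

lemma sum_binomPMF_lt_of_cpUpper_lt {n : ℕ} {δ p : ℝ} (hp : p ∈ Set.Icc (0 : ℝ) 1)
    (hδ : 0 < δ) {S : Finset ℕ} (hS : S ⊆ range (n + 1)) (h : ∀ j ∈ S, cpUpper n δ j < p) :
    ∑ j ∈ S, binomPMF n p j < δ := by
  rcases S.eq_empty_or_nonempty with rfl | hne
  · simpa using hδ
  · calc ∑ j ∈ S, binomPMF n p j ≤ binomCDF n p (S.max' hne) :=
          sum_binomPMF_le_binomCDF hp hS fun j hj => S.le_max' j hj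
      _ < δ := binomCDF_lt_of_cpUpper_lt hp (h _ (S.max'_mem hne))

theorem prob_false_certification_le_general
    (n : ℕ) (R : ℝ) (hR : R ∈ Set.Icc (0 : ℝ) 1)
    (α : ℝ) (hRα : α < R)
    (δ : ℝ) (hδ : δ ∈ Set.Ioo (0 : ℝ) 1) :
    ∑ j ∈ Finset.range (n + 1),
      (if cpUpper n δ j ≤ α then binomPMF n R j else 0) ≤ δ := by
  rw [← sum_filter]
  refine (sum_binomPMF_lt_of_cpUpper_lt hR hδ.1 (filter_subset _ _) fun j hj => ?_).le
  exact (mem_filter.1 hj).2.trans_lt hRα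

/-- If the true error rate R exceeds the user-specified risk level α, then the probability
of falsely certifying that the risk level is satisfied (i.e. p_U^δ(X) ≤ α) is at most δ. -/
theorem prob_false_certification_le
    (n : ℕ) (hn : 1 ≤ n) (R : ℝ) (hR : R ∈ Set.Icc (0 : ℝ) 1)
    (α : ℝ) (hα : α ∈ Set.Ioo (0 : ℝ) 1) (hRα : α < R)
    (δ : ℝ) (hδ : δ ∈ Set.Ioo (0 : ℝ) 1) :
    ∑ j ∈ Finset.range (n + 1),
      (if cpUpper n δ j ≤ α then binomPMF n R j else 0) ≤ δ :=
  prob_false_certification_le_general n R hR α hRα δ hδ
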